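/- The integer-valued function w on Sp(g,ℝ)×Sp(g,ℝ) is a 2-cocycle: w(M₁M₂,M₃) + w(M₁,M₂) = w(M₁,M₂M₃) + w(M₂,M₃), and w(E,M) = w(M,E) = 0 for all M₁,M₂,M₃,M ∈ Sp(g,ℝ). -/

import Mathlib

open Matrix Complex

noncomputable section

/-- The space of `2g × 2g` real matrices (symplectic candidates). -/
abbrev SpMat (g : ℕ) := Matrix (Fin g ⊕ Fin g) (Fin g ⊕ Fin g) ℝ

/-- The Siegel upper half plane of genus `g`: symmetric complex matrices with
positive definite imaginary part. -/
def SiegelUHP (g : ℕ) : Set (Matrix (Fin g) (Fin g) ℂ) :=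
  {Z | Z.IsSymm ∧ Matrix.PosDef (Matrix.of fun i j => (Z i j).im)}

/-- Coercion of a real matrix to a complex matrix. -/
def cmat {g : ℕ} (A : Matrix (Fin g) (Fin g) ℝ) : Matrix (Fin g) (Fin g) ℂ :=
  A.map (fun x => (x : ℂ))

/-- The automorphy factor `J(M,Z) = det (C Z + D)`. -/
def Jfac {g : ℕ} (M : SpMat g) (Z : Matrix (Fin g) (Fin g) ℂ) : ℂ :=
  (cmat M.toBlocks₂₁ * Z + cmat M.toBlocks₂₂).det

/-- The action `M⟨Z⟩ = (A Z + B)(C Z + D)⁻¹` on the Siegel upper half plane. -/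
def spAct {g : ℕ} (M : SpMat g) (Z : Matrix (Fin g) (Fin g) ℂ) :
    Matrix (Fin g) (Fin g) ℂ :=
  (cmat M.toBlocks₁₁ * Z + cmat M.toBlocks₁₂) *
    (cmat M.toBlocks₂₁ * Z + cmat M.toBlocks₂₂)⁻¹

/-- The base point `i·E` of the Siegel upper half plane. -/
def iE (g : ℕ) : Matrix (Fin g) (Fin g) ℂ := Complex.I • 1

/-- `L` is a continuous branch of `arg J(M, ·)` on the Siegel upper half plane,
normalized to the principal value at `Z = iE`. -/
def IsArgBranch (g : ℕ) (L : SpMat g → Matrix (Fin g) (Fin g) ℂ → ℝ) : Prop :=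
  (∀ M ∈ Matrix.symplecticGroup (Fin g) ℝ, ContinuousOn (L M) (SiegelUHP g)) ∧
  (∀ M ∈ Matrix.symplecticGroup (Fin g) ℝ, ∀ Z ∈ SiegelUHP g,
      ((‖Jfac M Z‖ : ℝ) : ℂ) * Complex.exp (Complex.I * (L M Z)) = Jfac M Z) ∧
  (∀ M ∈ Matrix.symplecticGroup (Fin g) ℝ, L M (iE g) = Complex.arg (Jfac M (iE g)))

/-- The cocycle `w(M,N) = (1/2π)(L(MN,Z) - L(M,NZ) - L(N,Z))`, evaluated at the
base point `Z = iE` (it is independent of `Z`). -/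
def wcoc {g : ℕ} (L : SpMat g → Matrix (Fin g) (Fin g) ℂ → ℝ) (M N : SpMat g) : ℝ :=
  (L (M * N) (iE g) - L M (spAct N (iE g)) - L N (iE g)) / (2 * Real.pi)

/-!
For symplectic `M, N` the function `Z ↦ L(M, N⟨Z⟩) + L(N, Z) - L(MN, Z)` is continuous on the
Siegel upper half plane and, by `J(MN, Z) = J(M, N⟨Z⟩) J(N, Z)`, takes values in `2πℤ`. The
half plane is convex, hence connected, so this function is constant: `w(M, N)` may be computed
at any `Z`. Computing `w(M₁, M₂)` at `M₃⟨iE⟩` and the other three terms at `iE` makes the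
cocycle identity telescope, and `w(E, E) = 0` forces `L(E, ·) = 0`.

The facts about the action come from writing `(AZ + B; CZ + D) = M (Z; 1)`. Since `M` preserves
the form `J`, `(CZ + D)ᴴ (AZ + B) - (AZ + B)ᴴ (CZ + D) = Z - Zᴴ`, and the same with
transposes. This gives the invertibility of `CZ + D`, the symmetry of `M⟨Z⟩` and
`Im M⟨Z⟩ = (CZ + D)⁻¹ᴴ (Im Z) (CZ + D)⁻¹`.
-/

open ComplexStarModule

theorem Matrix.transpose_fromRows_mul_J_mul_fromRows {n m R : Type*} [Fintype n] [DecidableEq n]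
    [CommRing R] (X Y : Matrix n m R) :
    (fromRows X Y)ᵀ * Matrix.J n R * fromRows X Y = Yᵀ * X - Xᵀ * Y := by
  rw [transpose_fromRows, Matrix.J, fromCols_mul_fromBlocks, fromCols_mul_fromRows]
  simp [sub_eq_add_neg, add_comm]

theorem Matrix.conjTranspose_fromRows_mul_J_mul_fromRows {n m R : Type*} [Fintype n]
    [DecidableEq n] [CommRing R] [StarRing R] (X Y : Matrix n m R) :
    (fromRows X Y)ᴴ * Matrix.J n R * fromRows X Y = Yᴴ * X - Xᴴ * Y := by
  rw [conjTranspose_fromRows_eq_fromCols_conjTranspose, Matrix.J, fromCols_mul_fromBlocks,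
    fromCols_mul_fromRows]
  simp [sub_eq_add_neg, add_comm]

theorem Matrix.conjTranspose_map_ofReal {n m : Type*} (A : Matrix n m ℝ) :
    (A.map ((↑) : ℝ → ℂ))ᴴ = (A.map ((↑) : ℝ → ℂ))ᵀ := by
  ext i j
  simp

open ComplexOrder in
theorem Matrix.posDef_map_ofReal_iff {n : Type*} [Fintype n] {Y : Matrix n n ℝ} :
    (Y.map ((↑) : ℝ → ℂ)).PosDef ↔ Y.PosDef := by
  constructor
  · intro h
    refine .of_dotProduct_mulVec_pos ?_ fun x hx => ?_
    · have hY := h.isHermitian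
      rw [IsHermitian, conjTranspose_map_ofReal, ← transpose_map] at hY
      exact (conjTranspose_eq_transpose_of_trivial Y).trans
        (Matrix.map_injective Complex.ofReal_injective hY)
    · have hx' : (fun i => (x i : ℂ)) ≠ 0 := fun h0 => hx (funext fun i => by
        simpa using congrFun h0 i)
      have hcast : star (fun i => (x i : ℂ)) ⬝ᵥ Y.map (↑) *ᵥ (fun i => (x i : ℂ))
          = ((x ⬝ᵥ Y *ᵥ x : ℝ) : ℂ) := by
        simp [dotProduct, mulVec]
      simpa [hcast] using h.dotProduct_mulVec_pos hx'
  · intro h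
    have hH : (Y.map ((↑) : ℝ → ℂ)).IsHermitian := h.isHermitian.map _ fun _ => by simp
    refine .of_dotProduct_mulVec_pos hH fun x hx => ?_
    set a : n → ℝ := fun i => (x i).re
    set b : n → ℝ := fun i => (x i).im
    have hre :
        (star x ⬝ᵥ Y.map ((↑) : ℝ → ℂ) *ᵥ x).re = a ⬝ᵥ Y *ᵥ a + b ⬝ᵥ Y *ᵥ b := by
      simp [a, b, dotProduct, mulVec, Complex.re_sum, Finset.mul_sum,
        ← Finset.sum_add_distrib]
    have hab : a ≠ 0 ∨ b ≠ 0 := by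
      by_contra! h0
      exact hx (funext fun i => Complex.ext (congrFun h0.1 i) (congrFun h0.2 i))
    refine Complex.pos_iff.mpr ⟨?_, (hH.im_star_dotProduct_mulVec_self x).symm⟩
    rw [hre]
    rcases hab with ha | hb
    · exact add_pos_of_pos_of_nonneg (h.dotProduct_mulVec_pos ha)
        (h.posSemidef.dotProduct_mulVec_nonneg b)
    · exact add_pos_of_nonneg_of_pos (h.posSemidef.dotProduct_mulVec_nonneg a)
        (h.dotProduct_mulVec_pos hb)

theorem Matrix.IsSymm.imaginaryPart_eq {n : Type*} {Z : Matrix n n ℂ} (hZ : Z.IsSymm) :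
    (ℑ Z : Matrix n n ℂ) = (Matrix.of fun i j => (Z i j).im).map (↑) := by
  ext i j
  simp [imaginaryPart_apply_coe, hZ.apply, sub_conj, ← mul_assoc, mul_comm _ I]

theorem SymplecticGroup.transpose_mul_J_mul {n m R : Type*} [Fintype n] [DecidableEq n]
    [CommRing R] {S : Matrix (n ⊕ n) (n ⊕ n) R} (hS : S ∈ symplecticGroup n R)
    (W : Matrix (n ⊕ n) m R) :
    (S * W)ᵀ * Matrix.J n R * (S * W) = Wᵀ * Matrix.J n R * W := calc
  _ = Wᵀ * (Sᵀ * Matrix.J n R * S) * W := by simp only [transpose_mul, Matrix.mul_assoc]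
  _ = _ := by rw [SymplecticGroup.mem_iff'.mp hS]

theorem SymplecticGroup.map_ofReal_mem {n : Type*} [Fintype n] [DecidableEq n]
    {S : Matrix (n ⊕ n) (n ⊕ n) ℝ} (hS : S ∈ symplecticGroup n ℝ) :
    S.map ((↑) : ℝ → ℂ) ∈ symplecticGroup n ℂ :=
  SymplecticGroup.map_mem hS Complex.ofRealHom

theorem SymplecticGroup.conjTranspose_map_ofReal_mul_J_mul {n m : Type*} [Fintype n]
    [DecidableEq n] {S : Matrix (n ⊕ n) (n ⊕ n) ℝ} (hS : S ∈ symplecticGroup n ℝ)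
    (W : Matrix (n ⊕ n) m ℂ) :
    (S.map ((↑) : ℝ → ℂ) * W)ᴴ * Matrix.J n ℂ * (S.map ((↑) : ℝ → ℂ) * W)
      = Wᴴ * Matrix.J n ℂ * W := calc
  _ = Wᴴ * ((S.map ((↑) : ℝ → ℂ))ᵀ * Matrix.J n ℂ * S.map (↑)) * W := by
    simp only [conjTranspose_mul, conjTranspose_map_ofReal, Matrix.mul_assoc]
  _ = _ := by rw [SymplecticGroup.mem_iff'.mp (map_ofReal_mem hS)]

/- With `r = q⁻¹`, `r' = (σ q)⁻¹` and `p' = σ p` for an anti-multiplicative `σ`, the left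
side is `E - σ E` for `E = p q⁻¹`. -/
theorem sub_eq_mul_sub_mul_mul {R : Type*} [Ring R] {p q r p' q' r' : R}
    (hq : q * r = 1) (hq' : r' * q' = 1) :
    p * r - r' * p' = r' * (q' * p - p' * q) * r := by
  rw [mul_sub, sub_mul, ← mul_assoc r', hq', one_mul, mul_assoc, mul_assoc, hq, mul_one]

theorem sub_star_eq_two_I_smul_imaginaryPart {A : Type*} [AddCommGroup A] [Module ℂ A]
    [StarAddMonoid A] [StarModule ℂ A] (a : A) : a - star a = (2 * I) • (ℑ a : A) := by
  rw [imaginaryPart_apply_coe, ← Complex.coe_smul, smul_smul, smul_smul]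
  norm_num [mul_comm, ← mul_assoc]

section Siegel

variable {g : ℕ}

def spNum (M : SpMat g) (Z : Matrix (Fin g) (Fin g) ℂ) : Matrix (Fin g) (Fin g) ℂ :=
  cmat M.toBlocks₁₁ * Z + cmat M.toBlocks₁₂

def spDen (M : SpMat g) (Z : Matrix (Fin g) (Fin g) ℂ) : Matrix (Fin g) (Fin g) ℂ :=
  cmat M.toBlocks₂₁ * Z + cmat M.toBlocks₂₂

theorem Jfac_eq_det_spDen (M : SpMat g) (Z : Matrix (Fin g) (Fin g) ℂ) :
    Jfac M Z = (spDen M Z).det := rfl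

theorem spAct_eq_spNum_mul_inv (M : SpMat g) (Z : Matrix (Fin g) (Fin g) ℂ) :
    spAct M Z = spNum M Z * (spDen M Z)⁻¹ := rfl

theorem map_ofReal_mul_fromRows (M : SpMat g) (Z : Matrix (Fin g) (Fin g) ℂ) :
    M.map ((↑) : ℝ → ℂ) * fromRows Z (1 : Matrix (Fin g) (Fin g) ℂ)
      = fromRows (spNum M Z) (spDen M Z) := by
  conv_lhs => rw [← fromBlocks_toBlocks M]
  rw [fromBlocks_map, fromBlocks_mul_fromRows]
  simp [spNum, spDen, cmat]

open ComplexOrder in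
theorem mem_SiegelUHP_iff {Z : Matrix (Fin g) (Fin g) ℂ} :
    Z ∈ SiegelUHP g ↔ Z.IsSymm ∧ (ℑ Z : Matrix (Fin g) (Fin g) ℂ).PosDef :=
  and_congr_right fun hZ => by rw [hZ.imaginaryPart_eq, posDef_map_ofReal_iff]

theorem spDen_transpose_mul_spNum_sub {M : SpMat g} (hM : M ∈ symplecticGroup (Fin g) ℝ)
    (Z : Matrix (Fin g) (Fin g) ℂ) :
    (spDen M Z)ᵀ * spNum M Z - (spNum M Z)ᵀ * spDen M Z = Z - Zᵀ := by
  rw [← transpose_fromRows_mul_J_mul_fromRows, ← map_ofReal_mul_fromRows,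
    SymplecticGroup.transpose_mul_J_mul (SymplecticGroup.map_ofReal_mem hM),
    transpose_fromRows_mul_J_mul_fromRows]
  simp

theorem spDen_conjTranspose_mul_spNum_sub {M : SpMat g} (hM : M ∈ symplecticGroup (Fin g) ℝ)
    (Z : Matrix (Fin g) (Fin g) ℂ) :
    (spDen M Z)ᴴ * spNum M Z - (spNum M Z)ᴴ * spDen M Z = Z - Zᴴ := by
  rw [← conjTranspose_fromRows_mul_J_mul_fromRows, ← map_ofReal_mul_fromRows,
    SymplecticGroup.conjTranspose_map_ofReal_mul_J_mul hM,
    conjTranspose_fromRows_mul_J_mul_fromRows]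
  simp

open ComplexOrder in
theorem isUnit_det_spDen {M : SpMat g} (hM : M ∈ symplecticGroup (Fin g) ℝ)
    {Z : Matrix (Fin g) (Fin g) ℂ} (hZ : (ℑ Z : Matrix (Fin g) (Fin g) ℂ).PosDef) :
    IsUnit (spDen M Z).det := by
  rw [isUnit_iff_ne_zero, ne_eq, ← exists_mulVec_eq_zero_iff]
  rintro ⟨v, hv, hQv⟩
  have hform : star v ⬝ᵥ (Z - Zᴴ) *ᵥ v = 0 := by
    rw [← spDen_conjTranspose_mul_spNum_sub hM, sub_mulVec, dotProduct_sub, ← mulVec_mulVec,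
      ← mulVec_mulVec, hQv, mulVec_zero, dotProduct_zero, sub_zero, dotProduct_mulVec,
      ← star_mulVec, hQv, star_zero, zero_dotProduct]
  rw [← star_eq_conjTranspose, sub_star_eq_two_I_smul_imaginaryPart, smul_mulVec,
    dotProduct_smul, smul_eq_mul, mul_eq_zero] at hform
  rcases hform with h | h
  · simp at h
  · exact (hZ.dotProduct_mulVec_pos hv).ne' h

theorem isUnit_Jfac {M : SpMat g} (hM : M ∈ symplecticGroup (Fin g) ℝ)
    {Z : Matrix (Fin g) (Fin g) ℂ} (hZ : Z ∈ SiegelUHP g) : IsUnit (Jfac M Z) :=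
  isUnit_det_spDen hM (mem_SiegelUHP_iff.mp hZ).2

theorem spAct_isSymm {M : SpMat g} (hM : M ∈ symplecticGroup (Fin g) ℝ)
    {Z : Matrix (Fin g) (Fin g) ℂ} (hZ : Z.IsSymm) (hQ : IsUnit (spDen M Z).det) :
    (spAct M Z).IsSymm := by
  have hQt : IsUnit (spDen M Z)ᵀ.det := by rwa [det_transpose]
  rw [IsSymm, eq_comm, ← sub_eq_zero, spAct_eq_spNum_mul_inv, transpose_mul,
    transpose_nonsing_inv, sub_eq_mul_sub_mul_mul (mul_nonsing_inv _ hQ) (nonsing_inv_mul _ hQt),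
    spDen_transpose_mul_spNum_sub hM, hZ.eq, sub_self, Matrix.mul_zero, Matrix.zero_mul]

theorem imaginaryPart_spAct {M : SpMat g} (hM : M ∈ symplecticGroup (Fin g) ℝ)
    {Z : Matrix (Fin g) (Fin g) ℂ} (hQ : IsUnit (spDen M Z).det) :
    (ℑ (spAct M Z) : Matrix (Fin g) (Fin g) ℂ)
      = ((spDen M Z)⁻¹)ᴴ * (ℑ Z : Matrix (Fin g) (Fin g) ℂ) * (spDen M Z)⁻¹ := by
  have hQh : IsUnit (spDen M Z)ᴴ.det := by rw [det_conjTranspose]; exact hQ.star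
  apply smul_right_injective _ (by simp : (2 * I : ℂ) ≠ 0)
  dsimp only
  rw [← sub_star_eq_two_I_smul_imaginaryPart, ← Matrix.smul_mul, ← Matrix.mul_smul,
    ← sub_star_eq_two_I_smul_imaginaryPart, star_eq_conjTranspose, star_eq_conjTranspose,
    ← spDen_conjTranspose_mul_spNum_sub hM Z, spAct_eq_spNum_mul_inv, conjTranspose_mul,
    conjTranspose_nonsing_inv]
  exact sub_eq_mul_sub_mul_mul (mul_nonsing_inv _ hQ) (nonsing_inv_mul _ hQh)

open ComplexOrder in
theorem spAct_mem {M : SpMat g} (hM : M ∈ symplecticGroup (Fin g) ℝ)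
    {Z : Matrix (Fin g) (Fin g) ℂ} (hZ : Z ∈ SiegelUHP g) : spAct M Z ∈ SiegelUHP g := by
  have hQ := isUnit_Jfac hM hZ
  rw [mem_SiegelUHP_iff] at hZ ⊢
  refine ⟨spAct_isSymm hM hZ.1 hQ, ?_⟩
  rw [imaginaryPart_spAct hM hQ]
  exact hZ.2.conjTranspose_mul_mul_same <| mulVec_injective_iff_isUnit.mpr <|
    (isUnit_iff_isUnit_det _).mpr (isUnit_nonsing_inv_det _ hQ)

theorem fromRows_spNum_spDen_mul (M : SpMat g) {N : SpMat g} {Z : Matrix (Fin g) (Fin g) ℂ}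
    (hQ : IsUnit (spDen N Z).det) :
    fromRows (spNum (M * N) Z) (spDen (M * N) Z)
      = fromRows (spNum M (spAct N Z) * spDen N Z) (spDen M (spAct N Z) * spDen N Z) := by
  have hN : fromRows (spNum N Z) (spDen N Z)
      = fromRows (spAct N Z) (1 : Matrix (Fin g) (Fin g) ℂ) * spDen N Z := by
    rw [fromRows_mul, Matrix.one_mul, spAct_eq_spNum_mul_inv,
      nonsing_inv_mul_cancel_right _ _ hQ]
  rw [← fromRows_mul, ← map_ofReal_mul_fromRows, ← map_ofReal_mul_fromRows, Matrix.mul_assoc,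
    ← hN, ← map_ofReal_mul_fromRows, ← Matrix.mul_assoc]
  exact congrArg (· * _) (Matrix.map_mul (f := Complex.ofRealHom))

theorem Jfac_mul (M : SpMat g) {N : SpMat g} {Z : Matrix (Fin g) (Fin g) ℂ}
    (hQ : IsUnit (spDen N Z).det) : Jfac (M * N) Z = Jfac M (spAct N Z) * Jfac N Z := by
  rw [Jfac_eq_det_spDen, (fromRows_inj (fromRows_spNum_spDen_mul M hQ)).2, det_mul]
  rfl

theorem spAct_mul (M : SpMat g) {N : SpMat g} {Z : Matrix (Fin g) (Fin g) ℂ}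
    (hQ : IsUnit (spDen N Z).det) : spAct (M * N) Z = spAct M (spAct N Z) := by
  obtain ⟨hP, hQ'⟩ := fromRows_inj (fromRows_spNum_spDen_mul M hQ)
  rw [spAct_eq_spNum_mul_inv, hP, hQ', Matrix.mul_inv_rev, Matrix.mul_assoc,
    mul_nonsing_inv_cancel_left _ _ hQ]
  rfl

theorem fromRows_spNum_spDen_one (Z : Matrix (Fin g) (Fin g) ℂ) :
    fromRows (spNum 1 Z) (spDen 1 Z) = fromRows Z 1 := by
  rw [← map_ofReal_mul_fromRows, Matrix.map_one _ (by simp) (by simp), Matrix.one_mul]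

theorem Jfac_one (Z : Matrix (Fin g) (Fin g) ℂ) : Jfac 1 Z = 1 := by
  rw [Jfac_eq_det_spDen, (fromRows_inj (fromRows_spNum_spDen_one Z)).2, det_one]

theorem spAct_one (Z : Matrix (Fin g) (Fin g) ℂ) : spAct 1 Z = Z := by
  obtain ⟨hP, hQ⟩ := fromRows_inj (fromRows_spNum_spDen_one Z)
  rw [spAct_eq_spNum_mul_inv, hP, hQ, inv_one, Matrix.mul_one]

theorem continuousOn_spAct {M : SpMat g} (hM : M ∈ symplecticGroup (Fin g) ℝ) :
    ContinuousOn (spAct M) (SiegelUHP g) := by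
  intro Z hZ
  have hNum : Continuous (spNum M) := by unfold spNum; fun_prop
  have hDen : Continuous (spDen M) := by unfold spDen; fun_prop
  have hInv : ContinuousAt Inv.inv (spDen M Z) :=
    continuousAt_matrix_inv _ (NormedRing.inverse_continuousAt (isUnit_Jfac hM hZ).unit)
  exact (hNum.continuousAt.mul (hInv.comp hDen.continuousAt)).continuousWithinAt

open ComplexOrder in
theorem iE_mem : iE g ∈ SiegelUHP g := by
  rw [mem_SiegelUHP_iff, iE, imaginaryPart_I_smul, IsSelfAdjoint.coe_realPart (by simp)]
  exact ⟨by simp [IsSymm], PosDef.one⟩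

theorem convex_SiegelUHP : Convex ℝ (SiegelUHP g) := by
  rintro Z₁ ⟨hs₁, hp₁⟩ Z₂ ⟨hs₂, hp₂⟩ a b ha hb hab
  refine ⟨(hs₁.smul a).add (hs₂.smul b), ?_⟩
  have him : (Matrix.of fun i j => ((a • Z₁ + b • Z₂) i j).im)
      = a • Matrix.of (fun i j => (Z₁ i j).im)
        + b • Matrix.of (fun i j => (Z₂ i j).im) := by
    ext i j
    simp
  rw [him]
  rcases ha.eq_or_lt with rfl | ha
  · rw [zero_add] at hab
    simpa [hab] using hp₂
  · exact (hp₁.smul ha).add_posSemidef (hp₂.posSemidef.smul hb)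

theorem isPreconnected_SiegelUHP : IsPreconnected (SiegelUHP g) :=
  convex_SiegelUHP.isPreconnected

end Siegel

namespace IsArgBranch

variable {g : ℕ} {L : SpMat g → Matrix (Fin g) (Fin g) ℂ → ℝ}

theorem exp_mul_I (hL : IsArgBranch g L) {M : SpMat g} (hM : M ∈ symplecticGroup (Fin g) ℝ)
    {Z : Matrix (Fin g) (Fin g) ℂ} (hZ : Z ∈ SiegelUHP g) :
    exp (L M Z * I) = Jfac M Z / ‖Jfac M Z‖ := by
  refine eq_div_of_mul_eq (by simpa using (isUnit_Jfac hM hZ).ne_zero) ?_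
  rw [mul_comm, mul_comm _ I]
  exact hL.2.1 M hM Z hZ

theorem add_sub_mem_zmultiples (hL : IsArgBranch g L) {M N : SpMat g}
    (hM : M ∈ symplecticGroup (Fin g) ℝ) (hN : N ∈ symplecticGroup (Fin g) ℝ)
    {Z : Matrix (Fin g) (Fin g) ℂ} (hZ : Z ∈ SiegelUHP g) :
    L M (spAct N Z) + L N Z - L (M * N) Z ∈ AddSubgroup.zmultiples (2 * Real.pi) := by
  have hexp : exp ((L M (spAct N Z) + L N Z : ℝ) * I) = exp (L (M * N) Z * I) := by
    rw [ofReal_add, add_mul, exp_add, hL.exp_mul_I hM (spAct_mem hN hZ), hL.exp_mul_I hN hZ,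
      hL.exp_mul_I (mul_mem hM hN) hZ, Jfac_mul M (isUnit_Jfac hN hZ), norm_mul]
    push_cast
    ring
  obtain ⟨n, hn⟩ := exp_eq_exp_iff_exists_int.mp hexp
  have hreal :
      ((L M (spAct N Z) + L N Z : ℝ) : ℂ) = (L (M * N) Z + n * (2 * Real.pi) : ℝ) := by
    refine mul_right_cancel₀ I_ne_zero ?_
    rw [hn]
    push_cast
    ring
  refine AddSubgroup.mem_zmultiples_iff.mpr ⟨n, ?_⟩
  rw [zsmul_eq_mul]
  linarith [ofReal_injective hreal]

theorem wcoc_eq (hL : IsArgBranch g L) {M N : SpMat g}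
    (hM : M ∈ symplecticGroup (Fin g) ℝ) (hN : N ∈ symplecticGroup (Fin g) ℝ)
    {Z : Matrix (Fin g) (Fin g) ℂ} (hZ : Z ∈ SiegelUHP g) :
    wcoc L M N = (L (M * N) Z - L M (spAct N Z) - L N Z) / (2 * Real.pi) := by
  have hcont : ContinuousOn (fun Z => L M (spAct N Z) + L N Z - L (M * N) Z) (SiegelUHP g) :=
    (((hL.1 M hM).comp (continuousOn_spAct hN) fun _ => spAct_mem hN).add (hL.1 N hN)).sub
      (hL.1 _ (mul_mem hM hN))
  have hdiscrete : IsDiscrete (AddSubgroup.zmultiples (2 * Real.pi) : Set ℝ) :=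
    isDiscrete_iff_discreteTopology.mpr
      (inferInstanceAs (DiscreteTopology (AddSubgroup.zmultiples (2 * Real.pi))))
  have hconst := isPreconnected_SiegelUHP.constant_of_mapsTo hdiscrete hcont
    (fun _ => hL.add_sub_mem_zmultiples hM hN) hZ iE_mem
  rw [wcoc]
  congr 1
  linarith

theorem apply_one (hL : IsArgBranch g L) {Z : Matrix (Fin g) (Fin g) ℂ}
    (hZ : Z ∈ SiegelUHP g) : L 1 Z = 0 := by
  have h := hL.wcoc_eq (one_mem _) (one_mem _) hZ
  simp only [wcoc, mul_one, spAct_one, hL.2.2 1 (one_mem _), Jfac_one, arg_one, sub_self,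
    zero_div, zero_sub] at h
  rw [eq_comm, div_eq_zero_iff, neg_eq_zero] at h
  exact h.resolve_right (by positivity)

end IsArgBranch

/-- `w` is a 2-cocycle on `Sp(g,ℝ)`:
`w(M₁M₂,M₃) + w(M₁,M₂) = w(M₁,M₂M₃) + w(M₂,M₃)` and `w(E,M) = w(M,E) = 0`. -/
theorem w_is_cocycle (g : ℕ)
    (L : SpMat g → Matrix (Fin g) (Fin g) ℂ → ℝ) (hL : IsArgBranch g L) :
    (∀ M₁ ∈ Matrix.symplecticGroup (Fin g) ℝ,
     ∀ M₂ ∈ Matrix.symplecticGroup (Fin g) ℝ,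
     ∀ M₃ ∈ Matrix.symplecticGroup (Fin g) ℝ,
      wcoc L (M₁ * M₂) M₃ + wcoc L M₁ M₂ = wcoc L M₁ (M₂ * M₃) + wcoc L M₂ M₃) ∧
    (∀ M ∈ Matrix.symplecticGroup (Fin g) ℝ, wcoc L 1 M = 0 ∧ wcoc L M 1 = 0) := by
  refine ⟨fun M₁ h₁ M₂ h₂ M₃ h₃ => ?_, fun M hM => ⟨?_, ?_⟩⟩
  · rw [hL.wcoc_eq h₁ h₂ (spAct_mem h₃ iE_mem), wcoc, wcoc, wcoc,
      spAct_mul M₂ (isUnit_Jfac h₃ iE_mem), mul_assoc]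
    ring
  · rw [wcoc, one_mul, hL.apply_one (spAct_mem hM iE_mem)]
    ring
  · rw [wcoc, mul_one, spAct_one, hL.apply_one iE_mem]
    ring
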